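/- Fix an integer q ≥ 1. For every admissible embedding family {A_{ℓ,i}} (ℓ = −1,…,q, i ≥ 0, nonnegative, with A_{ℓ,i} = 0 for i < 0 and A_i = Σ_{ℓ=−1}^q A_{ℓ,i−ℓ} for all i ≥ −1), the matrix F = Σ_{ℓ=0}^q A_ℓ(G) Σ_{j=0}^ℓ G^j satisfies, entrywise, F ≤ Σ_{ℓ=0}^{q−1} A_ℓ Σ_{j=0}^ℓ G^j + (Σ_{i=q}^∞ A_i G^{i−q}) Σ_{j=0}^q G^j. The right-hand side is the value of F for the particular admissible choice A_{ℓ,0} = A_ℓ for −1 ≤ ℓ ≤ q−1, A_{q,i} = A_{q+i} for i ≥ 0, and A_{ℓ,i} = 0 otherwise; hence this choice maximizes F among all admissible embeddings. -/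

import Mathlib

/-!
Write `S ℓ = ∑_{j<ℓ} G^j` and `W n = ∑_{n-p ≤ j < n} G^j` (`powWindow`), so that `W n = S n`
for `n ≤ p` and `W (p + k) = G^k S p`. Since `G ≥ 0`, every term `A_{ℓ,i} G^i S ℓ` of `F` is
at most `A_{ℓ,i} W (ℓ + i)`: `G^i S ℓ` sums the powers `G^j` with `i ≤ j < ℓ + i`, a subrange
of the window of `W (ℓ + i)`. Regrouping by `n = ℓ + i` with the admissibility relation
`A n = ∑_ℓ A_{ℓ,n-ℓ}` bounds `F` by `∑_n A n W n`, which is `F` of the optimal embedding.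
-/

open Matrix

/-- Entrywise order on square real matrices. -/
def Mle {m : ℕ} (X Y : Matrix (Fin m) (Fin m) ℝ) : Prop := ∀ i j, X i j ≤ Y i j

/-- `G` is the minimal nonnegative solution of `X = ∑_{i=0}^∞ A_{i-1} Xⁱ`. -/
def IsMinSol {m : ℕ} (A : ℕ → Matrix (Fin m) (Fin m) ℝ)
    (G : Matrix (Fin m) (Fin m) ℝ) : Prop :=
  Mle 0 G ∧ Summable (fun i => A i * G ^ i) ∧ G = ∑' i, A i * G ^ i ∧
    ∀ Y, Mle 0 Y → Summable (fun i => A i * Y ^ i) → Y = ∑' i, A i * Y ^ i → Mle G Y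

/-- `F = ∑_{ℓ=0}^q A_ℓ(G) ∑_{j=0}^ℓ G^j` (shifted index `ℓ' = ℓ+1 ∈ {0,…,p}`). -/
noncomputable def Fmat {m : ℕ} (p : ℕ) (Aℓ : ℕ → ℕ → Matrix (Fin m) (Fin m) ℝ)
    (G : Matrix (Fin m) (Fin m) ℝ) : Matrix (Fin m) (Fin m) ℝ :=
  ∑ ℓ ∈ Finset.range (p + 1), (∑' i, Aℓ ℓ i * G ^ i) * ∑ j ∈ Finset.range ℓ, G ^ j

/-- The optimal embedding: `A_{ℓ,0} = A_ℓ` for `-1 ≤ ℓ ≤ q-1` and `A_{q,i} = A_{q+i}`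
(shifted indices: `ℓ' = ℓ+1 ∈ {0,…,p}`, `p = q+1`, and `A i` denotes `A_{i-1}`). -/
def Aopt {m : ℕ} (p : ℕ) (A : ℕ → Matrix (Fin m) (Fin m) ℝ) :
    ℕ → ℕ → Matrix (Fin m) (Fin m) ℝ :=
  fun ℓ i => if ℓ < p then (if i = 0 then A ℓ else 0) else A (p + i)

open Finset

namespace Mle

variable {m : ℕ} {X Y Z W : Matrix (Fin m) (Fin m) ℝ}

theorem mul_nonneg (hX : Mle 0 X) (hY : Mle 0 Y) : Mle 0 (X * Y) := fun a b => by
  simpa [Matrix.mul_apply] using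
    Finset.sum_nonneg fun c _ => _root_.mul_nonneg (by simpa using hX a c) (by simpa using hY c b)

theorem pow_nonneg (hX : Mle 0 X) (n : ℕ) : Mle 0 (X ^ n) := by
  induction n with
  | zero => intro a b; by_cases hab : a = b <;> simp [hab]
  | succ n ih => rw [pow_succ]; exact ih.mul_nonneg hX

theorem mul_le_mul_left (hX : Mle 0 X) (h : Mle Y Z) : Mle (X * Y) (X * Z) := fun a b => by
  simp only [Matrix.mul_apply]
  exact Finset.sum_le_sum fun c _ =>
    mul_le_mul_of_nonneg_left (h c b) (by simpa using hX a c)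

theorem mul_le_mul_right (h : Mle X Y) (hW : Mle 0 W) : Mle (X * W) (Y * W) := fun a b => by
  simp only [Matrix.mul_apply]
  exact Finset.sum_le_sum fun c _ =>
    mul_le_mul_of_nonneg_right (h a c) (by simpa using hW c b)

variable {ι : Type*} {s t : Finset ι} {f g : ι → Matrix (Fin m) (Fin m) ℝ}

theorem sum_nonneg (h : ∀ i ∈ s, Mle 0 (f i)) : Mle 0 (∑ i ∈ s, f i) := fun a b => by
  simpa [Matrix.sum_apply] using Finset.sum_nonneg fun i hi => by simpa using h i hi a b

theorem sum_le_sum (h : ∀ i ∈ s, Mle (f i) (g i)) : Mle (∑ i ∈ s, f i) (∑ i ∈ s, g i) :=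
  fun a b => by simpa [Matrix.sum_apply] using Finset.sum_le_sum fun i hi => h i hi a b

theorem sum_le_sum_of_subset (hst : s ⊆ t) (h : ∀ i ∈ t, Mle 0 (f i)) :
    Mle (∑ i ∈ s, f i) (∑ i ∈ t, f i) := fun a b => by
  simpa [Matrix.sum_apply] using
    Finset.sum_le_sum_of_subset_of_nonneg hst fun i hi _ => by simpa using h i hi a b

theorem single_le_sum (h : ∀ i ∈ s, Mle 0 (f i)) {i : ι} (hi : i ∈ s) :
    Mle (f i) (∑ j ∈ s, f j) := by
  simpa using sum_le_sum_of_subset (singleton_subset_iff.mpr hi) h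

theorem tsum_le_tsum (h : ∀ i, Mle (f i) (g i)) (hf : Summable f) (hg : Summable g) :
    Mle (∑' i, f i) (∑' i, g i) := fun a b => by
  have entry {u : ι → Matrix (Fin m) (Fin m) ℝ} (hu : Summable u) :
      (∑' i, u i) a b = ∑' i, u i a b :=
    (congrFun (tsum_apply hu) b).trans (tsum_apply (Pi.summable.mp hu a))
  rw [entry hf, entry hg]
  exact (Pi.summable.mp (Pi.summable.mp hf a) b).tsum_le_tsum (fun i => h i a b)
    (Pi.summable.mp (Pi.summable.mp hg a) b)

theorem summable_of_le (h0 : ∀ i, Mle 0 (f i)) (h : ∀ i, Mle (f i) (g i)) (hg : Summable g) :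
    Summable f :=
  Pi.summable.mpr fun a => Pi.summable.mpr fun b =>
    (Pi.summable.mp (Pi.summable.mp hg a) b).of_nonneg_of_le (fun i => by simpa using h0 i a b)
      (fun i => h i a b)

end Mle

section PowerWindow

variable {m : ℕ} (G : Matrix (Fin m) (Fin m) ℝ) (p : ℕ)

noncomputable def powWindow (n : ℕ) : Matrix (Fin m) (Fin m) ℝ := ∑ j ∈ Ico (n - p) n, G ^ j

theorem powWindow_of_le {n : ℕ} (hn : n ≤ p) :
    powWindow G p n = ∑ j ∈ range n, G ^ j := by
  rw [powWindow, Nat.sub_eq_zero_of_le hn, range_eq_Ico]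

theorem powWindow_add (k : ℕ) : powWindow G p (k + p) = G ^ k * ∑ j ∈ range p, G ^ j := by
  simp [powWindow, sum_Ico_eq_sum_range, mul_sum, pow_add]

variable {G p}

theorem powWindow_nonneg (hG : Mle 0 G) (n : ℕ) : Mle 0 (powWindow G p n) :=
  Mle.sum_nonneg fun j _ => hG.pow_nonneg j

theorem pow_mul_geomSum_le_powWindow (hG : Mle 0 G) {ℓ : ℕ} (hℓ : ℓ ≤ p) (i : ℕ) :
    Mle (G ^ i * ∑ j ∈ range ℓ, G ^ j) (powWindow G p (ℓ + i)) := by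
  have hshift : G ^ i * ∑ j ∈ range ℓ, G ^ j = ∑ j ∈ Ico i (ℓ + i), G ^ j := by
    simp [sum_Ico_eq_sum_range, mul_sum, pow_add]
  rw [hshift]
  refine Mle.sum_le_sum_of_subset (fun j hj => ?_) fun j _ => hG.pow_nonneg j
  simp only [mem_Ico] at hj ⊢
  omega

end PowerWindow

/-- `Aℓ ℓ i` is `A_{ℓ-1,i}` and `A n` is `A_{n-1}`, as in `Fmat`. -/
structure IsAdmissible {m : ℕ} (p : ℕ) (A : ℕ → Matrix (Fin m) (Fin m) ℝ)
    (Aℓ : ℕ → ℕ → Matrix (Fin m) (Fin m) ℝ) : Prop where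
  nonneg : ∀ ℓ i, Mle 0 (Aℓ ℓ i)
  eq_sum : ∀ i, A i = ∑ ℓ ∈ range (p + 1), if ℓ ≤ i then Aℓ ℓ (i - ℓ) else 0

namespace IsAdmissible

variable {m p : ℕ} {A : ℕ → Matrix (Fin m) (Fin m) ℝ}
  {Aℓ : ℕ → ℕ → Matrix (Fin m) (Fin m) ℝ}

theorem component_le (h : IsAdmissible p A Aℓ) {ℓ : ℕ} (hℓ : ℓ ≤ p) (i : ℕ) :
    Mle (Aℓ ℓ i) (A (ℓ + i)) := by
  rw [h.eq_sum]
  convert Mle.single_le_sum (fun ℓ' _ => ?_) (mem_range.mpr (Nat.lt_succ_of_le hℓ)) using 1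
  · simp
  · split_ifs
    · exact h.nonneg _ _
    · exact fun _ _ => le_rfl

variable {T : ℕ → Matrix (Fin m) (Fin m) ℝ}

theorem summable_mul (h : IsAdmissible p A Aℓ) (hT : ∀ n, Mle 0 (T n))
    (hs : Summable fun n => A n * T n) {ℓ : ℕ} (hℓ : ℓ ≤ p) :
    Summable fun i => Aℓ ℓ i * T (ℓ + i) := by
  refine Mle.summable_of_le (fun i => (h.nonneg ℓ i).mul_nonneg (hT _))
    (fun i => (h.component_le hℓ i).mul_le_mul_right (hT _)) ?_
  simpa only [add_comm ℓ] using (summable_nat_add_iff ℓ).mpr hs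

theorem sum_tsum_mul (h : IsAdmissible p A Aℓ) (hT : ∀ n, Mle 0 (T n))
    (hs : Summable fun n => A n * T n) :
    ∑ ℓ ∈ range (p + 1), ∑' i, Aℓ ℓ i * T (ℓ + i) = ∑' n, A n * T n := by
  set g : ℕ → ℕ → Matrix (Fin m) (Fin m) ℝ :=
    fun ℓ n => if ℓ ≤ n then Aℓ ℓ (n - ℓ) * T n else 0
  have hshift (ℓ i : ℕ) : g ℓ (i + ℓ) = Aℓ ℓ i * T (ℓ + i) := by simp [g, add_comm]
  have hg (ℓ : ℕ) (hℓ : ℓ ∈ range (p + 1)) : Summable (g ℓ) := by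
    rw [← summable_nat_add_iff ℓ]
    simpa only [hshift] using h.summable_mul hT hs (Nat.le_of_lt_succ (mem_range.mp hℓ))
  have hsplit (ℓ : ℕ) (hℓ : ℓ ∈ range (p + 1)) :
      ∑' n, g ℓ n = ∑' i, Aℓ ℓ i * T (ℓ + i) := by
    rw [← (hg ℓ hℓ).sum_add_tsum_nat_add ℓ,
      sum_eq_zero fun n hn => if_neg (by simpa using hn)]
    simp only [hshift, zero_add]
  have hsum (n : ℕ) : A n * T n = ∑ ℓ ∈ range (p + 1), g ℓ n := by
    simp only [h.eq_sum n, sum_mul, g, ite_mul, zero_mul]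
  rw [← sum_congr rfl hsplit, ← Summable.tsum_finsetSum hg]
  exact tsum_congr fun n => (hsum n).symm

end IsAdmissible

section Embedding

variable {m p : ℕ} {A : ℕ → Matrix (Fin m) (Fin m) ℝ} {G : Matrix (Fin m) (Fin m) ℝ}

theorem summable_mul_powWindow (hs : Summable fun k => A (p + k) * G ^ k) :
    Summable fun n => A n * powWindow G p n := by
  rw [← summable_nat_add_iff p]
  refine (hs.mul_right (∑ j ∈ range p, G ^ j)).congr fun k => ?_
  rw [powWindow_add, add_comm k, mul_assoc]

theorem tsum_mul_powWindow (hs : Summable fun k => A (p + k) * G ^ k) :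
    ∑' n, A n * powWindow G p n =
      ∑ ℓ ∈ range p, A ℓ * ∑ j ∈ range ℓ, G ^ j +
        (∑' k, A (p + k) * G ^ k) * ∑ j ∈ range p, G ^ j := by
  rw [← (summable_mul_powWindow hs).sum_add_tsum_nat_add p, ← hs.tsum_mul_right]
  congr 1
  · exact sum_congr rfl fun n hn => by rw [powWindow_of_le G p (mem_range.mp hn).le]
  · exact tsum_congr fun k => by rw [powWindow_add, add_comm k, mul_assoc]

theorem Fmat_le_tsum_mul_powWindow {Aℓ : ℕ → ℕ → Matrix (Fin m) (Fin m) ℝ}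
    (hAℓ : IsAdmissible p A Aℓ) (hG : Mle 0 G)
    (hsG : ∀ ℓ, Summable fun i => Aℓ ℓ i * G ^ i)
    (hs : Summable fun n => A n * powWindow G p n) :
    Mle (Fmat p Aℓ G) (∑' n, A n * powWindow G p n) := by
  rw [← hAℓ.sum_tsum_mul (powWindow_nonneg hG) hs, Fmat]
  refine Mle.sum_le_sum fun ℓ hℓ => ?_
  have hℓp : ℓ ≤ p := Nat.le_of_lt_succ (mem_range.mp hℓ)
  rw [← (hsG ℓ).tsum_mul_right]
  refine Mle.tsum_le_tsum (fun i => ?_) ((hsG ℓ).mul_right _)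
    (hAℓ.summable_mul (powWindow_nonneg hG) hs hℓp)
  rw [mul_assoc]
  exact (hAℓ.nonneg ℓ i).mul_le_mul_left (pow_mul_geomSum_le_powWindow hG hℓp i)

theorem Fmat_Aopt :
    Fmat p (Aopt p A) G =
      ∑ ℓ ∈ range p, A ℓ * ∑ j ∈ range ℓ, G ^ j +
        (∑' k, A (p + k) * G ^ k) * ∑ j ∈ range p, G ^ j := by
  rw [Fmat, sum_range_succ]
  congr 1
  · refine sum_congr rfl fun ℓ hℓ => ?_
    have hℓp : ℓ < p := mem_range.mp hℓ
    rw [tsum_eq_single 0 fun i hi => by simp [Aopt, hℓp, hi]]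
    simp [Aopt, hℓp]
  · simp [Aopt]

end Embedding

theorem sum_range_mul_geomSum {m : ℕ} (A : ℕ → Matrix (Fin m) (Fin m) ℝ)
    (G : Matrix (Fin m) (Fin m) ℝ) (p : ℕ) :
    ∑ ℓ ∈ range p, A ℓ * ∑ j ∈ range ℓ, G ^ j =
      ∑ ℓ ∈ range (p - 1), A (ℓ + 1) * ∑ j ∈ range (ℓ + 1), G ^ j := by
  cases p with
  | zero => rfl
  | succ q => simp [sum_range_succ' _ q]

theorem stmt9_general (m : ℕ) (p : ℕ) (hp : 2 ≤ p)
    (A : ℕ → Matrix (Fin m) (Fin m) ℝ)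
    (Aℓ : ℕ → ℕ → Matrix (Fin m) (Fin m) ℝ)
    (hAℓ0 : ∀ ℓ i, Mle 0 (Aℓ ℓ i))
    (hcompat : ∀ i, A i = ∑ ℓ ∈ Finset.range (p + 1),
      if ℓ ≤ i then Aℓ ℓ (i - ℓ) else 0)
    (G : Matrix (Fin m) (Fin m) ℝ) (hG : IsMinSol A G)
    -- all series occurring converge entrywise:
    (hsG : ∀ ℓ, Summable (fun i => Aℓ ℓ i * G ^ i))
    (hsAstar : ∀ j, Summable (fun k => A (j + k + 1) * G ^ k)) :
    Mle (Fmat p Aℓ G)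
      ((∑ ℓ ∈ Finset.range (p - 1), A (ℓ + 1) * ∑ j ∈ Finset.range (ℓ + 1), G ^ j) +
        (∑' k : ℕ, A (p + k) * G ^ k) * ∑ j ∈ Finset.range p, G ^ j) ∧
    Fmat p (Aopt p A) G =
      (∑ ℓ ∈ Finset.range (p - 1), A (ℓ + 1) * ∑ j ∈ Finset.range (ℓ + 1), G ^ j) +
        (∑' k : ℕ, A (p + k) * G ^ k) * ∑ j ∈ Finset.range p, G ^ j := by
  have hs : Summable fun k => A (p + k) * G ^ k := by
    simpa only [show ∀ k, p - 1 + k + 1 = p + k by omega] using hsAstar (p - 1)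
  rw [← sum_range_mul_geomSum, ← Fmat_Aopt]
  refine ⟨?_, rfl⟩
  rw [Fmat_Aopt, ← tsum_mul_powWindow hs]
  exact Fmat_le_tsum_mul_powWindow ⟨hAℓ0, hcompat⟩ hG.1 hsG (summable_mul_powWindow hs)

/-- Theorem 4.1: the embedding of the whole tail in the coefficient of
degree `q+1` maximizes `F`.  Here `p = q+1 ≥ 2`. -/
theorem stmt9 (m : ℕ) (hm : 1 ≤ m) (p : ℕ) (hp : 2 ≤ p)
    (A : ℕ → Matrix (Fin m) (Fin m) ℝ)
    (Aℓ : ℕ → ℕ → Matrix (Fin m) (Fin m) ℝ)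
    (hA0 : ∀ i, Mle 0 (A i)) (hAℓ0 : ∀ ℓ i, Mle 0 (Aℓ ℓ i))
    (hsum : Summable A)
    (hrow : ∀ k, ∑ j, (∑' i, A i) k j ≤ 1)
    (hcompat : ∀ i, A i = ∑ ℓ ∈ Finset.range (p + 1),
      if ℓ ≤ i then Aℓ ℓ (i - ℓ) else 0)
    (G : Matrix (Fin m) (Fin m) ℝ) (hG : IsMinSol A G)
    -- all series occurring converge entrywise:
    (hsG : ∀ ℓ, Summable (fun i => Aℓ ℓ i * G ^ i))
    (hsAstar : ∀ j, Summable (fun k => A (j + k + 1) * G ^ k)) :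
    Mle (Fmat p Aℓ G)
      ((∑ ℓ ∈ Finset.range (p - 1), A (ℓ + 1) * ∑ j ∈ Finset.range (ℓ + 1), G ^ j) +
        (∑' k : ℕ, A (p + k) * G ^ k) * ∑ j ∈ Finset.range p, G ^ j) ∧
    Fmat p (Aopt p A) G =
      (∑ ℓ ∈ Finset.range (p - 1), A (ℓ + 1) * ∑ j ∈ Finset.range (ℓ + 1), G ^ j) +
        (∑' k : ℕ, A (p + k) * G ^ k) * ∑ j ∈ Finset.range p, G ^ j :=
  stmt9_general m p hp A Aℓ hAℓ0 hcompat G hG hsG hsAstar
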